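/- arXiv:0705.2915 — 2 statements merged into one kernel-verified Lean document; each statement's English description precedes it below -/
import Mathlib

section
/- If T is an increasing tableau of skew shape ν/λ (entries strictly increase along each row and each column) and {x_i} is any set of inner corners of λ, then the result K-jdt_{x_i}(T) of the K-theoretic jeu de taquin slide is again an increasing tableau. -/
open Finset
open scoped Classical

/-- A box of a Young diagram: (row, column), rows increasing downward. -/
abbrev Box : Type := ℕ × ℕ

/-- A Young diagram: a finite lower set in both coordinates. -/
def IsYoung (μ : Finset Box) : Prop :=
  (∀ r c : ℕ, (r + 1, c) ∈ μ → (r, c) ∈ μ) ∧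
  (∀ r c : ℕ, (r, c + 1) ∈ μ → (r, c) ∈ μ)

/-- Two boxes are adjacent (share an edge). -/
def adjB (a b : Box) : Prop :=
  (a.1 = b.1 ∧ (a.2 + 1 = b.2 ∨ b.2 + 1 = a.2)) ∨
  (a.2 = b.2 ∧ (a.1 + 1 = b.1 ∨ b.1 + 1 = a.1))

/-- Connectivity within a finite set of boxes. -/
def conn (S : Finset Box) (a b : Box) : Prop :=
  Relation.ReflTransGen (fun x y => x ∈ S ∧ y ∈ S ∧ adjB x y) a b

/-- Entries strictly increase along rows and columns. -/
def IncreasingOn (dom : Finset Box) (f : Box → ℕ) : Prop :=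
  (∀ r c : ℕ, (r, c) ∈ dom → (r, c + 1) ∈ dom → f (r, c) < f (r, c + 1)) ∧
  (∀ r c : ℕ, (r, c) ∈ dom → (r + 1, c) ∈ dom → f (r, c) < f (r + 1, c))

def maxEntry (dom : Finset Box) (f : Box → ℕ) : ℕ := dom.sup f

/-- An increasing tableau: positive entries, strictly increasing along rows and
columns, and every value `1,…,max` appears at least once. -/
def IsIncTab (dom : Finset Box) (f : Box → ℕ) : Prop :=
  IncreasingOn dom f ∧ (∀ b ∈ dom, 1 ≤ f b) ∧
  (∀ v : ℕ, 1 ≤ v → v ≤ maxEntry dom f → ∃ b ∈ dom, f b = v)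

/-- A standard Young tableau: an increasing tableau with distinct entries. -/
def IsSYT (dom : Finset Box) (f : Box → ℕ) : Prop :=
  IsIncTab dom f ∧ ∀ a ∈ dom, ∀ b ∈ dom, f a = f b → a = b

/-- An inner corner of `λ`: a maximally southeast box of `λ`. -/
def InnerCorner (lam : Finset Box) (x : Box) : Prop :=
  x ∈ lam ∧ (x.1 + 1, x.2) ∉ lam ∧ (x.1, x.2 + 1) ∉ lam

/-- An outer corner of `ν`: a maximally northwest box outside `ν`. -/
def OuterCorner (nu : Finset Box) (x : Box) : Prop :=
  x ∉ nu ∧ (x.1 = 0 ∨ (x.1 - 1, x.2) ∈ nu) ∧ (x.2 = 0 ∨ (x.1, x.2 - 1) ∈ nu)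

/-- No two boxes of `A` share a row or a column. -/
def NoTwoSameRowCol (A : Finset Box) : Prop :=
  ∀ a ∈ A, ∀ b ∈ A, a ≠ b → a.1 ≠ b.1 ∧ a.2 ≠ b.2

/-- One `switch` stage of a K-jdt slide: in the union of ribbons formed by the
•-boxes (`st.1`) and the boxes of the numerical region `st.2.1` with entry `i`,
swap the two symbols on every connected component with at least two boxes
(single-box components are unchanged).  The state is (dots, numerical domain,
numerical entries). -/
noncomputable def switchStep (st : Finset Box × Finset Box × (Box → ℕ)) (i : ℕ) :
    Finset Box × Finset Box × (Box → ℕ) :=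
  let dots := st.1
  let dom := st.2.1
  let f := st.2.2
  let S : Finset Box := dots ∪ dom.filter (fun b => f b = i)
  let sw : Box → Prop := fun b => ∃ b' ∈ S, b' ≠ b ∧ conn S b b'
  ( dom.filter (fun b => f b = i ∧ sw b) ∪ dots.filter (fun b => ¬ sw b),
    dom.filter (fun b => ¬ (f b = i ∧ sw b)) ∪ dots.filter sw,
    fun b => if b ∈ dots ∧ sw b then i else f b )

/-- The state of a K-jdt slide started with •'s at `xs`, after processing the
values `1, 2, …, m`. -/
noncomputable def KState (xs dom : Finset Box) (f : Box → ℕ) (m : ℕ) :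
    Finset Box × Finset Box × (Box → ℕ) :=
  (List.range m).foldl (fun st i => switchStep st (i + 1)) (xs, dom, f)

/-- The K-theoretic jeu de taquin slide of the tableau `(dom, f)` into the set
`xs` of inner corners: process the values `1,…,max` and discard the final •'s. -/
noncomputable def KJdt (xs dom : Finset Box) (f : Box → ℕ) : Finset Box × (Box → ℕ) :=
  ((KState xs dom f (maxEntry dom f)).2.1, (KState xs dom f (maxEntry dom f)).2.2)

/-- The state of a reverse K-jdt slide: •'s start at `xs` (outer corners) and the
values `m, m-1, …, 1` are processed in decreasing order. -/
noncomputable def KRevState (xs dom : Finset Box) (f : Box → ℕ) (m : ℕ) :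
    Finset Box × Finset Box × (Box → ℕ) :=
  (List.range m).foldr (fun i st => switchStep st (i + 1)) (xs, dom, f)

/-- A slide applied to the state (inner shape `λ`, tableau domain, entries). -/
noncomputable def doSlide (st : Finset Box × Finset Box × (Box → ℕ)) (xs : Finset Box) :
    Finset Box × Finset Box × (Box → ℕ) :=
  (st.1 \ xs, (KJdt xs st.2.1 st.2.2).1, (KJdt xs st.2.1 st.2.2).2)

/-- A reverse slide applied to the state (inner shape `λ`, tableau domain, entries). -/
noncomputable def doRevSlide (st : Finset Box × Finset Box × (Box → ℕ)) (xs : Finset Box) :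
    Finset Box × Finset Box × (Box → ℕ) :=
  (st.1 \ (KRevState xs st.2.1 st.2.2 (maxEntry st.2.1 st.2.2)).1,
   (KRevState xs st.2.1 st.2.2 (maxEntry st.2.1 st.2.2)).2.1,
   (KRevState xs st.2.1 st.2.2 (maxEntry st.2.1 st.2.2)).2.2)

/-- One step of a rectification: a K-jdt slide into a nonempty set of inner corners. -/
def RectStep (p q : Finset Box × Finset Box × (Box → ℕ)) : Prop :=
  ∃ xs : Finset Box, xs.Nonempty ∧ (∀ x ∈ xs, InnerCorner p.1 x) ∧ q = doSlide p xs

/-- The tableau `(dom, f)` of shape `ν/λ` admits a rectification order ending at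
the straight-shape tableau `(dom', f')`. -/
def RectTo (lam dom : Finset Box) (f : Box → ℕ) (dom' : Finset Box) (f' : Box → ℕ) : Prop :=
  ∃ g : Box → ℕ, Relation.ReflTransGen RectStep (lam, dom, f) (∅, dom', g) ∧
    ∀ b ∈ dom', g b = f' b

def rowLen (μ : Finset Box) (r : ℕ) : ℕ := (μ.filter (fun b => b.1 = r)).card

/-- The superstandard tableau of straight shape `μ`: rows filled consecutively. -/
def sstd (μ : Finset Box) : Box → ℕ :=
  fun b => (∑ i ∈ Finset.range b.1, rowLen μ i) + b.2 + 1

/-- `a` occurs before `b` in the reading word (rows left to right, bottom to top). -/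
def ReadBefore (a b : Box) : Prop := b.1 < a.1 ∨ (a.1 = b.1 ∧ a.2 < b.2)

/-- Length of the longest strictly increasing subsequence of the reading word. -/
noncomputable def LIS (dom : Finset Box) (f : Box → ℕ) : ℕ :=
  (dom.powerset.filter
    (fun I => ∀ a ∈ I, ∀ b ∈ I, ReadBefore a b → f a < f b)).sup Finset.card

/-- One step of K-infusion: slide the boxes carrying the largest label `m` of the
inner tableau through the outer tableau, recording `m` at the vacated holes. -/
noncomputable def infusionStep
    (st : (Finset Box × (Box → ℕ)) × (Finset Box × (Box → ℕ)) × (Finset Box × (Box → ℕ))) :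
    (Finset Box × (Box → ℕ)) × (Finset Box × (Box → ℕ)) × (Finset Box × (Box → ℕ)) :=
  let m := maxEntry st.1.1 st.1.2
  let xs := st.1.1.filter (fun b => st.1.2 b = m)
  let ks := KState xs st.2.1.1 st.2.1.2 (maxEntry st.2.1.1 st.2.1.2)
  ( (st.1.1 \ xs, st.1.2),
    (ks.2.1, ks.2.2),
    (st.2.2.1 ∪ ks.1, fun b => if b ∈ ks.1 then m else st.2.2.2 b) )

/-- K-infusion of the pair `(T, U)`, where `U`'s shape extends `T`'s shape:
returns `(K-infusion₁(T,U), K-infusion₂(T,U))`. -/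
noncomputable def KInfusion (Tdom : Finset Box) (Tf : Box → ℕ)
    (Udom : Finset Box) (Uf : Box → ℕ) :
    (Finset Box × (Box → ℕ)) × (Finset Box × (Box → ℕ)) :=
  ((infusionStep^[maxEntry Tdom Tf] ((Tdom, Tf), (Udom, Uf), (∅, fun _ => 0))).2.1,
   (infusionStep^[maxEntry Tdom Tf] ((Tdom, Tf), (Udom, Uf), (∅, fun _ => 0))).2.2)

/-- `Δ(T)`: erase the entry `1` at the northwest corner, subtract one from the
remaining entries, and slide into the vacated corner. -/
noncomputable def Delta (p : Finset Box × (Box → ℕ)) : Finset Box × (Box → ℕ) :=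
  KJdt {((0 : ℕ), (0 : ℕ))} (p.1.erase (0, 0)) (fun b => p.2 b - 1)

/-- K-evacuation: box `b` receives label `i` when `b` belongs to the shape of
`Δ^{i-1}(T)` but not to the shape of `Δ^{i}(T)`. -/
noncomputable def Kevac (p : Finset Box × (Box → ℕ)) : Box → ℕ :=
  fun b => sInf {i : ℕ | b ∉ (Delta^[i] p).1}

/-- A horizontal strip: no two boxes in the same column. -/
def HorizontalStrip (dom : Finset Box) : Prop :=
  ∀ a ∈ dom, ∀ b ∈ dom, a ≠ b → a.2 ≠ b.2

def LeftmostIn (dom : Finset Box) (r c : ℕ) : Prop :=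
  (r, c) ∈ dom ∧ ∀ c' < c, (r, c') ∉ dom

def RightmostIn (dom : Finset Box) (r c : ℕ) : Prop :=
  (r, c) ∈ dom ∧ ∀ c' > c, (r, c') ∉ dom

/-- A `t`-Pieri filling of a horizontal strip: entries of each row consecutive,
the bottom row starts with `1`, each other row starts with the last entry of the
next nonempty row below it, or with that entry plus one; entries are `1,…,t`. -/
def IsPieri (dom : Finset Box) (f : Box → ℕ) (t : ℕ) : Prop :=
  HorizontalStrip dom ∧
  (∀ r c : ℕ, (r, c) ∈ dom → (r, c + 1) ∈ dom → f (r, c + 1) = f (r, c) + 1) ∧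
  (∀ r c : ℕ, LeftmostIn dom r c → (∀ b ∈ dom, b.1 ≤ r) → f (r, c) = 1) ∧
  (∀ r c r' c' : ℕ, LeftmostIn dom r c → RightmostIn dom r' c' → r < r' →
    (∀ b ∈ dom, ¬ (r < b.1 ∧ b.1 < r')) →
    (f (r, c) = f (r', c') ∨ f (r, c) = f (r', c') + 1)) ∧
  (∀ b ∈ dom, 1 ≤ f b ∧ f b ≤ t) ∧ (dom.Nonempty → ∃ b ∈ dom, f b = t)

/-- The domain of the one-row shape `(t)`. -/
def rowDom (t : ℕ) : Finset Box := (Finset.range t).image (fun c => ((0 : ℕ), c))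

/-- The entries of the superstandard one-row tableau `S_(t)`. -/
def rowEnt : Box → ℕ := fun b => b.2 + 1

def numRows (dom : Finset Box) : ℕ := (dom.image Prod.fst).card

/-- The number of increasing tableaux of shape `ν/λ` whose K-rectification (for
some, equivalently by Theorem 1 any, rectification order) is the superstandard
tableau `S_μ`.  Tableaux are normalized to vanish off their domain. -/
noncomputable def KrectCount (lam nu mu : Finset Box) : ℕ :=
  Set.ncard {f : Box → ℕ | (∀ b, b ∉ nu \ lam → f b = 0) ∧ IsIncTab (nu \ lam) f ∧
    ∃ g, Relation.ReflTransGen RectStep (lam, nu \ lam, f) (∅, mu, g) ∧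
      ∀ b ∈ mu, g b = sstd mu b}

/-- Apply a (forward or reverse) K-jdt slide, as specified by `mv`. -/
noncomputable def applyMove (st : Finset Box × Finset Box × (Box → ℕ))
    (mv : Bool × Finset Box) : Finset Box × Finset Box × (Box → ℕ) :=
  if mv.1 then doSlide st mv.2 else doRevSlide st mv.2

def ValidMove (st : Finset Box × Finset Box × (Box → ℕ)) (mv : Bool × Finset Box) : Prop :=
  mv.2.Nonempty ∧ (mv.1 = true → ∀ x ∈ mv.2, InnerCorner st.1 x) ∧
    (mv.1 = false → ∀ x ∈ mv.2, OuterCorner (st.1 ∪ st.2.1) x)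

noncomputable def applySeq (L : List (Bool × Finset Box))
    (st : Finset Box × Finset Box × (Box → ℕ)) : Finset Box × Finset Box × (Box → ℕ) :=
  L.foldl applyMove st

def ValidSeq : List (Bool × Finset Box) → (Finset Box × Finset Box × (Box → ℕ)) → Prop
  | [], _ => True
  | mv :: L, st => ValidMove st mv ∧ ValidSeq L (applyMove st mv)

/-- K-dual equivalence: every common sequence of (forward or reverse) slides
produces tableaux of the same shape. -/
def KDualEquiv (lam dom : Finset Box) (f g : Box → ℕ) : Prop :=
  ∀ L : List (Bool × Finset Box),
    ValidSeq L (lam, dom, f) → ValidSeq L (lam, dom, g) →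
    (applySeq L (lam, dom, f)).2.1 = (applySeq L (lam, dom, g)).2.1

/-!
Let a • that has survived the switches for `1, …, i` stand for the value `i + 1/2`. Before the
first switch the filling of the chosen corners together with `ν/λ` by •'s and entries is
increasing. The switch for `i + 1` turns each adjacent pair `• < i+1` into `i+1 < •` and moves
every other • past `i + 1`; as no two •'s and no two `(i+1)`'s are adjacent, the filling stays
increasing and its set of entries stays `{1, …, max}`. After the last switch the •'s exceed every
entry, so they are closed under moving right or down inside `ν`: removing them from `ν` and the
corners from `λ` leaves two Young diagrams whose difference carries the slid tableau.
-/

lemma Box.covBy_iff {a b : Box} : a ⋖ b ↔ b = (a.1 + 1, a.2) ∨ b = (a.1, a.2 + 1) := by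
  obtain ⟨a1, a2⟩ := a
  obtain ⟨b1, b2⟩ := b
  simp only [Prod.mk_covBy_mk_iff, Nat.covBy_iff_add_one_eq, Prod.mk.injEq]
  omega

lemma adjB_iff_covBy {a b : Box} : adjB a b ↔ a ⋖ b ∨ b ⋖ a := by
  simp only [adjB, Box.covBy_iff, Prod.ext_iff]
  omega

lemma adjB_symm {a b : Box} (h : adjB a b) : adjB b a := by
  unfold adjB at *
  omega

lemma increasingOn_iff {dom : Finset Box} {f : Box → ℕ} :
    IncreasingOn dom f ↔ ∀ a ∈ dom, ∀ b ∈ dom, a ⋖ b → f a < f b := by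
  refine ⟨fun h a ha b hb hab => ?_, fun h => ⟨fun r c ha hb => ?_, fun r c ha hb => ?_⟩⟩
  · rcases Box.covBy_iff.1 hab with rfl | rfl
    exacts [h.2 _ _ ha hb, h.1 _ _ ha hb]
  · exact h _ ha _ hb (Box.covBy_iff.2 (Or.inr rfl))
  · exact h _ ha _ hb (Box.covBy_iff.2 (Or.inl rfl))

lemma isYoung_iff {μ : Finset Box} : IsYoung μ ↔ ∀ a b : Box, a ⋖ b → b ∈ μ → a ∈ μ := by
  refine ⟨fun h a b hab hb => ?_, fun h => ⟨fun r c => h _ _ ?_, fun r c => h _ _ ?_⟩⟩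
  · rcases Box.covBy_iff.1 hab with rfl | rfl
    exacts [h.1 _ _ hb, h.2 _ _ hb]
  · exact Box.covBy_iff.2 (Or.inl rfl)
  · exact Box.covBy_iff.2 (Or.inr rfl)

lemma innerCorner_iff {lam : Finset Box} {x : Box} :
    InnerCorner lam x ↔ x ∈ lam ∧ ∀ b, x ⋖ b → b ∉ lam := by
  simp only [InnerCorner, Box.covBy_iff]
  aesop

lemma IsYoung.sdiff {ν D : Finset Box} (hν : IsYoung ν)
    (hD : ∀ d ∈ D, ∀ b ∈ ν, d ⋖ b → b ∈ D) : IsYoung (ν \ D) := by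
  rw [isYoung_iff] at hν ⊢
  intro a b hab hb
  rw [mem_sdiff] at hb ⊢
  exact ⟨hν a b hab hb.1, fun ha => hb.2 (hD a ha b hb.1 hab)⟩

lemma IncreasingOn.ne_of_adjB {U : Finset Box} {w : Box → ℕ} (h : IncreasingOn U w)
    {a b : Box} (ha : a ∈ U) (hb : b ∈ U) (hab : adjB a b) : w a ≠ w b := by
  rw [increasingOn_iff] at h
  rcases adjB_iff_covBy.1 hab with hab | hba
  exacts [(h a ha b hb hab).ne, (h b hb a ha hba).ne']

lemma IsIncTab.image_eq_Icc {dom : Finset Box} {f : Box → ℕ} (h : IsIncTab dom f) :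
    dom.image f = Icc 1 (maxEntry dom f) := by
  ext v
  simp only [mem_image, mem_Icc]
  refine ⟨?_, fun hv => h.2.2 v hv.1 hv.2⟩
  rintro ⟨b, hb, rfl⟩
  exact ⟨h.2.1 b hb, le_sup hb⟩

lemma isIncTab_of_image_eq_Icc {dom : Finset Box} {f : Box → ℕ} {M : ℕ}
    (hinc : IncreasingOn dom f) (himage : dom.image f = Icc 1 M) : IsIncTab dom f := by
  have hmem : ∀ v, v ∈ Icc 1 M ↔ ∃ b ∈ dom, f b = v := by simp [← himage]
  refine ⟨hinc, fun b hb => (mem_Icc.1 ((hmem _).2 ⟨b, hb, rfl⟩)).1, fun v hv1 hvM => ?_⟩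
  refine (hmem v).1 (mem_Icc.2 ⟨hv1, hvM.trans (Finset.sup_le fun b hb => ?_)⟩)
  exact (mem_Icc.1 ((hmem _).2 ⟨b, hb, rfl⟩)).2

def InNontrivialComponent (S : Finset Box) (b : Box) : Prop :=
  ∃ b' ∈ S, b' ≠ b ∧ conn S b b'

lemma inNontrivialComponent_iff {S : Finset Box} {b : Box} :
    InNontrivialComponent S b ↔ b ∈ S ∧ ∃ b' ∈ S, adjB b b' := by
  constructor
  · rintro ⟨b', -, hne, hconn⟩
    rcases hconn.cases_head with rfl | ⟨c, ⟨hbS, hcS, hadj⟩, -⟩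
    exacts [absurd rfl hne, ⟨hbS, c, hcS, hadj⟩]
  · rintro ⟨hbS, b', hb'S, hadj⟩
    refine ⟨b', hb'S, ?_, .single ⟨hbS, hb'S, hadj⟩⟩
    rintro rfl
    simp [adjB] at hadj

/-- At stage `i` a • stands for the value `i + 1/2`; all values are doubled to stay in `ℕ`. -/
def dotFilling (i : ℕ) (st : Finset Box × Finset Box × (Box → ℕ)) (b : Box) : ℕ :=
  if b ∈ st.1 then 2 * i + 1 else 2 * st.2.2 b

section Switch

variable {D R : Finset Box} {g : Box → ℕ} {i j : ℕ} {a b : Box}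

def ribbons (D R : Finset Box) (g : Box → ℕ) (j : ℕ) : Finset Box :=
  D ∪ R.filter (fun b => g b = j)

lemma mem_switchStep_fst :
    b ∈ (switchStep (D, R, g) j).1 ↔
      (b ∈ R ∧ g b = j ∧ InNontrivialComponent (ribbons D R g j) b) ∨
        (b ∈ D ∧ ¬ InNontrivialComponent (ribbons D R g j) b) := by
  simp only [switchStep, ribbons, InNontrivialComponent, mem_union, mem_filter]

lemma mem_switchStep_snd_fst :
    b ∈ (switchStep (D, R, g) j).2.1 ↔
      (b ∈ R ∧ ¬ (g b = j ∧ InNontrivialComponent (ribbons D R g j) b)) ∨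
        (b ∈ D ∧ InNontrivialComponent (ribbons D R g j) b) := by
  simp only [switchStep, ribbons, InNontrivialComponent, mem_union, mem_filter]

lemma switchStep_snd_snd :
    (switchStep (D, R, g) j).2.2 b =
      if b ∈ D ∧ InNontrivialComponent (ribbons D R g j) b then j else g b := by
  unfold switchStep ribbons InNontrivialComponent
  dsimp only
  congr

lemma switchStep_union (hDR : Disjoint D R) :
    (switchStep (D, R, g) j).1 ∪ (switchStep (D, R, g) j).2.1 = D ∪ R := by
  ext b
  simp only [mem_union, mem_switchStep_fst, mem_switchStep_snd_fst]
  have : b ∈ D → b ∉ R := fun h => disjoint_left.1 hDR h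
  tauto

lemma disjoint_switchStep (hDR : Disjoint D R) :
    Disjoint (switchStep (D, R, g) j).1 (switchStep (D, R, g) j).2.1 := by
  rw [disjoint_left]
  intro b
  simp only [mem_switchStep_fst, mem_switchStep_snd_fst]
  have : b ∈ D → b ∉ R := fun h => disjoint_left.1 hDR h
  tauto

lemma dotFilling_switchStep (hDR : Disjoint D R) :
    dotFilling (i + 1) (switchStep (D, R, g) (i + 1)) b =
      if b ∈ D then
        (if InNontrivialComponent (ribbons D R g (i + 1)) b then 2 * i + 2 else 2 * i + 3)
      else if g b = i + 1 ∧ InNontrivialComponent (ribbons D R g (i + 1)) b then 2 * i + 3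
      else 2 * g b := by
  have hR : b ∈ D → b ∉ R := fun h => disjoint_left.1 hDR h
  have hS : InNontrivialComponent (ribbons D R g (i + 1)) b → b ∈ D ∨ b ∈ R := by
    rw [inNontrivialComponent_iff, ribbons, mem_union, mem_filter]
    tauto
  simp only [dotFilling, mem_switchStep_fst, switchStep_snd_snd]
  split_ifs <;> grind

lemma mem_iff_not_mem_of_adjB_ribbons
    (hinc : IncreasingOn (D ∪ R) (dotFilling i (D, R, g)))
    (ha : a ∈ ribbons D R g (i + 1)) (hb : b ∈ ribbons D R g (i + 1)) (hab : adjB a b) :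
    (a ∈ D ↔ b ∉ D) := by
  have hval : ∀ x ∈ ribbons D R g (i + 1),
      dotFilling i (D, R, g) x = if x ∈ D then 2 * i + 1 else 2 * i + 2 := by
    intro x hx
    simp only [ribbons, mem_union, mem_filter] at hx
    simp only [dotFilling]
    split_ifs <;> grind
  have hU : ribbons D R g (i + 1) ⊆ D ∪ R := union_subset_union subset_rfl (filter_subset _ _)
  have hne := hinc.ne_of_adjB (hU ha) (hU hb) hab
  rw [hval a ha, hval b hb] at hne
  split_ifs at hne <;> tauto

lemma IncreasingOn.dotFilling_switchStep (hDR : Disjoint D R)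
    (hinc : IncreasingOn (D ∪ R) (dotFilling i (D, R, g))) :
    IncreasingOn (D ∪ R) (dotFilling (i + 1) (switchStep (D, R, g) (i + 1))) := by
  rw [increasingOn_iff] at hinc ⊢
  intro a ha b hb hab
  have hlt := hinc a ha b hb hab
  have hsw : a ∈ D → b ∉ D → g b = i + 1 →
      InNontrivialComponent (ribbons D R g (i + 1)) a ∧
        InNontrivialComponent (ribbons D R g (i + 1)) b := by
    intro haD hbD hgb
    have hbS : b ∈ ribbons D R g (i + 1) :=
      mem_union_right _ (mem_filter.2 ⟨(mem_union.1 hb).resolve_left hbD, hgb⟩)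
    have hadj : adjB a b := adjB_iff_covBy.2 (Or.inl hab)
    exact ⟨inNontrivialComponent_iff.2 ⟨mem_union_left _ haD, b, hbS, hadj⟩,
      inNontrivialComponent_iff.2 ⟨hbS, a, mem_union_left _ haD, adjB_symm hadj⟩⟩
  rw [_root_.dotFilling_switchStep hDR, _root_.dotFilling_switchStep hDR]
  simp only [dotFilling] at hlt
  -- All values move within `(2i, 2i + 4)` or stay put, so only a • followed by an `i + 1`
  -- could change order, and those two boxes both switch.
  split_ifs at hlt ⊢ <;> grind

lemma image_switchStep (hDR : Disjoint D R)
    (hinc : IncreasingOn (D ∪ R) (dotFilling i (D, R, g))) :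
    (switchStep (D, R, g) (i + 1)).2.1.image (switchStep (D, R, g) (i + 1)).2.2 =
      R.image g := by
  have hRD : ∀ {b}, b ∈ R → b ∉ D := fun hb hbD => disjoint_left.1 hDR hbD hb
  ext v
  simp only [mem_image, mem_switchStep_snd_fst, switchStep_snd_snd]
  constructor
  · rintro ⟨b, (⟨hbR, -⟩ | ⟨hbD, hbsw⟩), rfl⟩
    · exact ⟨b, hbR, by rw [if_neg fun h => hRD hbR h.1]⟩
    · obtain ⟨hbS, c, hcS, hbc⟩ := inNontrivialComponent_iff.1 hbsw
      have hcD : c ∉ D := (mem_iff_not_mem_of_adjB_ribbons hinc hbS hcS hbc).1 hbD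
      obtain ⟨hcR, hgc⟩ := mem_filter.1 ((mem_union.1 hcS).resolve_left hcD)
      exact ⟨c, hcR, by rw [if_pos ⟨hbD, hbsw⟩, hgc]⟩
  · rintro ⟨b, hbR, rfl⟩
    by_cases hb : g b = i + 1 ∧ InNontrivialComponent (ribbons D R g (i + 1)) b
    · obtain ⟨hbS, c, hcS, hbc⟩ := inNontrivialComponent_iff.1 hb.2
      have hcD : c ∈ D := by
        by_contra hcD
        exact hRD hbR ((mem_iff_not_mem_of_adjB_ribbons hinc hbS hcS hbc).2 hcD)
      have hcsw := inNontrivialComponent_iff.2 ⟨hcS, b, hbS, adjB_symm hbc⟩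
      exact ⟨c, Or.inr ⟨hcD, hcsw⟩, by rw [if_pos ⟨hcD, hcsw⟩, hb.1]⟩
    · exact ⟨b, Or.inl ⟨hbR, hb⟩, by rw [if_neg fun h => hRD hbR h.1]⟩

end Switch

structure SlideInvariant (U : Finset Box) (M i : ℕ)
    (st : Finset Box × Finset Box × (Box → ℕ)) : Prop where
  union_eq : st.1 ∪ st.2.1 = U
  disjoint : Disjoint st.1 st.2.1
  image_eq : st.2.1.image st.2.2 = Icc 1 M
  increasingOn : IncreasingOn U (dotFilling i st)

namespace SlideInvariant

variable {U : Finset Box} {M i : ℕ} {st : Finset Box × Finset Box × (Box → ℕ)}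

lemma switchStep (h : SlideInvariant U M i st) :
    SlideInvariant U M (i + 1) (switchStep st (i + 1)) := by
  obtain ⟨D, R, g⟩ := st
  obtain ⟨rfl, hDR, himage, hinc⟩ := h
  exact ⟨switchStep_union hDR, disjoint_switchStep hDR, (image_switchStep hDR hinc).trans himage,
    hinc.dotFilling_switchStep hDR⟩

lemma kState {xs dom : Finset Box} {f : Box → ℕ} (h : SlideInvariant U M 0 (xs, dom, f))
    (m : ℕ) : SlideInvariant U M m (KState xs dom f m) := by
  induction m with
  | zero => exact h
  | succ m ih =>
    rw [KState, List.range_succ, List.foldl_append]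
    exact ih.switchStep

lemma isIncTab (h : SlideInvariant U M i st) : IsIncTab st.2.1 st.2.2 := by
  have hRU : st.2.1 ⊆ U := h.union_eq ▸ subset_union_right
  have hw : ∀ b ∈ st.2.1, dotFilling i st b = 2 * st.2.2 b := fun b hb =>
    if_neg fun hbD => disjoint_left.1 h.disjoint hbD hb
  refine isIncTab_of_image_eq_Icc (increasingOn_iff.2 fun a ha b hb hab => ?_) h.image_eq
  have := increasingOn_iff.1 h.increasingOn a (hRU ha) b (hRU hb) hab
  rw [hw a ha, hw b hb] at this
  omega

lemma covBy_mem_fst (h : SlideInvariant U M M st) {d b : Box} (hd : d ∈ st.1) (hb : b ∈ U)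
    (hdb : d ⋖ b) : b ∈ st.1 := by
  by_contra hbD
  have hbR : b ∈ st.2.1 := (mem_union.1 (h.union_eq ▸ hb)).resolve_left hbD
  have hgb : st.2.2 b ≤ M := (mem_Icc.1 (h.image_eq ▸ mem_image_of_mem st.2.2 hbR)).2
  have := increasingOn_iff.1 h.increasingOn d (h.union_eq ▸ mem_union_left _ hd) b hb hdb
  simp only [dotFilling, if_pos hd, if_neg hbD] at this
  omega

end SlideInvariant

section Slide

variable {lam nu xs : Finset Box}

lemma slideInvariant_start {f : Box → ℕ} (hlam : IsYoung lam) (hT : IsIncTab (nu \ lam) f)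
    (hxs : ∀ x ∈ xs, InnerCorner lam x) :
    SlideInvariant (xs ∪ (nu \ lam)) (maxEntry (nu \ lam) f) 0 (xs, nu \ lam, f) := by
  have hxl : xs ⊆ lam := fun x hx => (hxs x hx).1
  refine ⟨rfl, disjoint_sdiff.mono_left hxl, hT.image_eq_Icc, ?_⟩
  rw [increasingOn_iff]
  rw [isYoung_iff] at hlam
  have hT' := increasingOn_iff.1 hT.1
  intro a ha b hb hab
  simp only [dotFilling]
  rcases mem_union.1 ha with haX | haR <;> rcases mem_union.1 hb with hbX | hbR
  · exact absurd (hxl hbX) ((innerCorner_iff.1 (hxs a haX)).2 b hab)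
  · have := hT.2.1 b hbR
    rw [if_pos haX, if_neg fun hbX => (mem_sdiff.1 hbR).2 (hxl hbX)]
    omega
  · exact absurd (hlam a b hab (hxl hbX)) (mem_sdiff.1 haR).2
  · have := hT' a haR b hbR hab
    rw [if_neg fun haX => (mem_sdiff.1 haR).2 (hxl haX),
      if_neg fun hbX => (mem_sdiff.1 hbR).2 (hxl hbX)]
    omega

lemma mem_sdiff_of_covBy (hlam : IsYoung lam) (hxs : ∀ x ∈ xs, InnerCorner lam x) {d b : Box}
    (hd : d ∈ xs ∪ (nu \ lam)) (hb : b ∈ nu) (hdb : d ⋖ b) : b ∈ nu \ lam := by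
  refine mem_sdiff.2 ⟨hb, fun hbl => ?_⟩
  rcases mem_union.1 hd with hdX | hdR
  · exact (innerCorner_iff.1 (hxs d hdX)).2 b hdb hbl
  · exact (mem_sdiff.1 hdR).2 (isYoung_iff.1 hlam d b hdb hbl)

lemma SlideInvariant.exists_skew_shape {M : ℕ} {st : Finset Box × Finset Box × (Box → ℕ)}
    (hlam : IsYoung lam) (hnu : IsYoung nu) (hsub : lam ⊆ nu)
    (hxs : ∀ x ∈ xs, InnerCorner lam x) (h : SlideInvariant (xs ∪ (nu \ lam)) M M st) :
    ∃ lam' nu' : Finset Box, IsYoung lam' ∧ IsYoung nu' ∧ lam' ⊆ nu' ∧ st.2.1 = nu' \ lam' := by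
  have hxl : xs ⊆ lam := fun x hx => (hxs x hx).1
  have hDU : st.1 ⊆ xs ∪ (nu \ lam) := h.union_eq ▸ subset_union_left
  refine ⟨lam \ xs, nu \ st.1, ?_, ?_, ?_, ?_⟩
  · exact hlam.sdiff fun d hd b hb hdb => absurd hb ((innerCorner_iff.1 (hxs d hd)).2 b hdb)
  · exact hnu.sdiff fun d hd b hb hdb => h.covBy_mem_fst hd
      (mem_union_right _ (mem_sdiff_of_covBy hlam hxs (hDU hd) hb hdb)) hdb
  · intro x hx
    obtain ⟨hxlam, hxX⟩ := mem_sdiff.1 hx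
    refine mem_sdiff.2 ⟨hsub hxlam, fun hxD => ?_⟩
    rcases mem_union.1 (hDU hxD) with hxX' | hxR
    exacts [hxX hxX', (mem_sdiff.1 hxR).2 hxlam]
  · ext x
    have hx : x ∈ st.1 ∪ st.2.1 ↔ x ∈ xs ∪ (nu \ lam) := by rw [h.union_eq]
    have : x ∈ st.1 → x ∉ st.2.1 := fun hxD => disjoint_left.1 h.disjoint hxD
    have := @hxl x
    have := @hsub x
    simp only [mem_sdiff, mem_union] at hx ⊢
    tauto

end Slide

/-- a K-jdt slide of an increasing tableau of skew shape `ν/λ`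
into a set of inner corners of `λ` is again an increasing tableau (of some
skew shape). -/
theorem stmt0 (lam nu : Finset Box) (f : Box → ℕ) (xs : Finset Box)
    (hlam : IsYoung lam) (hnu : IsYoung nu) (hsub : lam ⊆ nu)
    (hT : IsIncTab (nu \ lam) f) (hxs : ∀ x ∈ xs, InnerCorner lam x) :
    ∃ lam' nu' : Finset Box, IsYoung lam' ∧ IsYoung nu' ∧ lam' ⊆ nu' ∧
      (KJdt xs (nu \ lam) f).1 = nu' \ lam' ∧
      IsIncTab (KJdt xs (nu \ lam) f).1 (KJdt xs (nu \ lam) f).2 := by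
  have h := (slideInvariant_start hlam hT hxs).kState (maxEntry (nu \ lam) f)
  obtain ⟨lam', nu', hlam', hnu', hsub', hshape⟩ := h.exists_skew_shape hlam hnu hsub hxs
  exact ⟨lam', nu', hlam', hnu', hsub', hshape, h.isIncTab⟩
end

section
/- Any K-jdt slide applied to a t-Pieri filling results in a t-Pieri filling. -/
open Finset
open scoped Classical

/-!
Let `U = (ν ∖ λ) ∪ xs`. Because `ν ∖ λ` is a horizontal strip and the `xs` are inner corners
of `λ`, a cell of `U` has a `U`-neighbour below it only when it is a corner sitting over a
strip box; and a Pieri filling is weakly increasing along the reading word, with consecutive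
entries in each row. Stage `i` of the slide moves each • into a neighbouring box with entry
`i` to its right or below it. By induction on `i` one keeps track of an invariant: the •'s and
the numbered boxes together fill `U`, no two •'s touch, every column holds at most one number,
the numbers stay weakly increasing along the reading word, consecutive in rows, and take every
value `1, …, t`, with entries `≤ i` before and `> i` after each •. At the end these are
exactly the properties that make the numbered boxes a `t`-Pieri filling.
-/

lemma adjB_ne {a b : Box} (h : adjB a b) : a ≠ b := by
  rintro rfl
  unfold adjB at h
  omega

lemma exists_ne_conn_iff {S : Finset Box} {b : Box} :
    (∃ b' ∈ S, b' ≠ b ∧ conn S b b') ↔ b ∈ S ∧ ∃ b' ∈ S, adjB b b' := by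
  constructor
  · rintro ⟨b', -, hne, hconn⟩
    obtain ⟨c, ⟨hb, hc, hadj⟩, -⟩ := Relation.TransGen.head'_iff.mp
      ((Relation.reflTransGen_iff_eq_or_transGen.mp hconn).resolve_left hne)
    exact ⟨hb, c, hc, hadj⟩
  · rintro ⟨hb, b', hb', hadj⟩
    exact ⟨b', hb', (adjB_ne hadj).symm, .single ⟨hb, hb', hadj⟩⟩

lemma ReadBefore.trans {a b c : Box} (hab : ReadBefore a b) (hbc : ReadBefore b c) :
    ReadBefore a c := by
  unfold ReadBefore at *
  omega

lemma readBefore_trichotomous (a b : Box) : ReadBefore a b ∨ a = b ∨ ReadBefore b a := by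
  obtain ⟨a₁, a₂⟩ := a
  obtain ⟨b₁, b₂⟩ := b
  simp only [ReadBefore, Prod.ext_iff]
  omega

lemma readBefore_succ_of_readBefore {r c : ℕ} {a : Box} (h : ReadBefore (r, c) a)
    (ha : a ≠ (r, c + 1)) : ReadBefore (r, c + 1) a := by
  obtain ⟨a₁, a₂⟩ := a
  simp only [ReadBefore, ne_eq, Prod.ext_iff] at *
  omega

lemma IsYoung.mem_of_le {μ : Finset Box} (h : IsYoung μ) {r c r' c' : ℕ} (hm : (r, c) ∈ μ)
    (hr : r' ≤ r) (hc : c' ≤ c) : (r', c') ∈ μ := by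
  induction r, hr using Nat.le_induction with
  | base =>
    induction c, hc using Nat.le_induction with
    | base => exact hm
    | succ n _ ih => exact ih (h.2 r' n hm)
  | succ n _ ih => exact ih (h.1 n c hm)

def RowsOrdConnected (dom : Finset Box) : Prop :=
  ∀ r, ({c | (r, c) ∈ dom} : Set ℕ).OrdConnected

lemma IsYoung.rowsOrdConnected_sdiff {lam nu : Finset Box} (hlam : IsYoung lam)
    (hnu : IsYoung nu) : RowsOrdConnected (nu \ lam) := by
  refine fun r => ⟨fun c hc c'' hc'' c' ⟨hle, hle'⟩ => ?_⟩
  simp only [Set.mem_ofPred_eq, Finset.mem_sdiff] at hc hc'' ⊢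
  exact ⟨hnu.mem_of_le hc''.1 le_rfl hle', fun h => hc.2 (hlam.mem_of_le h le_rfl hle)⟩

lemma HorizontalStrip.fst_eq {dom : Finset Box} (h : HorizontalStrip dom) {r r' c : ℕ}
    (h₁ : (r, c) ∈ dom) (h₂ : (r', c) ∈ dom) : r = r' := by
  by_contra hne
  exact h _ h₁ _ h₂ (by simp [hne]) rfl

section Pieri

variable {dom : Finset Box} {f : Box → ℕ} {t r c : ℕ}

lemma exists_leftmostIn (h : (r, c) ∈ dom) : ∃ c₀ ≤ c, LeftmostIn dom r c₀ := by
  have hex : ∃ c', (r, c') ∈ dom := ⟨c, h⟩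
  exact ⟨Nat.find hex, Nat.find_min' hex h, Nat.find_spec hex, fun _ => Nat.find_min hex⟩

lemma exists_rightmostIn (h : (r, c) ∈ dom) : ∃ c₁ ≥ c, RightmostIn dom r c₁ := by
  obtain ⟨b, hbr, hmax⟩ := (dom.filter (·.1 = r)).exists_max_image Prod.snd ⟨(r, c), by simp [h]⟩
  obtain ⟨hb, rfl⟩ := Finset.mem_filter.mp hbr
  refine ⟨b.2, hmax (b.1, c) (by simp [h]), hb, fun c' hc' hmem => ?_⟩
  exact absurd (hmax (b.1, c') (by simp [hmem])) (not_le.mpr hc')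

lemma RightmostIn.unique {c' : ℕ} (h : RightmostIn dom r c) (h' : RightmostIn dom r c') :
    c = c' := by
  by_contra hne
  rcases Nat.lt_or_gt_of_ne hne with hlt | hlt
  · exact h.2 c' hlt h'.1
  · exact h'.2 c hlt h.1

lemma exists_rightmostIn_next_row (h : ∃ b ∈ dom, r < b.1) :
    ∃ r' c', r < r' ∧ RightmostIn dom r' c' ∧ ∀ b ∈ dom, ¬ (r < b.1 ∧ b.1 < r') := by
  have hex : ∃ r', r < r' ∧ ∃ c', (r', c') ∈ dom := by
    obtain ⟨b, hb, hlt⟩ := h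
    exact ⟨b.1, hlt, b.2, hb⟩
  obtain ⟨hlt, c, hc⟩ := Nat.find_spec hex
  obtain ⟨c', -, hR⟩ := exists_rightmostIn hc
  exact ⟨_, c', hlt, hR, fun b hb ⟨h₁, h₂⟩ => Nat.find_min hex h₂ ⟨h₁, b.2, hb⟩⟩

lemma IsPieri.maxEntry_eq (hP : IsPieri dom f t) (hne : dom.Nonempty) : maxEntry dom f = t := by
  obtain ⟨b, hb, hfb⟩ := hP.2.2.2.2.2 hne
  exact le_antisymm (Finset.sup_le fun b hb => (hP.2.2.2.2.1 b hb).2) (hfb ▸ Finset.le_sup hb)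

lemma isPieri_of_monotone (hstrip : HorizontalStrip dom)
    (hrow : ∀ r c, (r, c) ∈ dom → (r, c + 1) ∈ dom → f (r, c + 1) = f (r, c) + 1)
    (hmono : ∀ a ∈ dom, ∀ b ∈ dom, ReadBefore a b → f a ≤ f b)
    (hbound : ∀ b ∈ dom, 1 ≤ f b ∧ f b ≤ t)
    (hsurj : ∀ v, 1 ≤ v → v ≤ t → ∃ b ∈ dom, f b = v) : IsPieri dom f t := by
  have hread {a b : Box} (ha : a ∈ dom) (hb : b ∈ dom) (hlt : f a < f b) : ReadBefore a b := by
    rcases readBefore_trichotomous a b with h | rfl | h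
    · exact h
    · exact absurd hlt (lt_irrefl _)
    · exact absurd (hmono _ hb _ ha h) (not_le.mpr hlt)
  refine ⟨hstrip, hrow, fun r c hL hbot => ?_, fun r c r' c' hL hR hlt hgap => ?_, hbound,
    fun ⟨b, hb⟩ => hsurj t ((hbound b hb).1.trans (hbound b hb).2) le_rfl⟩
  · obtain ⟨⟨z₁, z₂⟩, hz, hz1⟩ := hsurj 1 le_rfl ((hbound _ hL.1).1.trans (hbound _ hL.1).2)
    by_contra hne
    rcases hread hz hL.1 (by have := (hbound _ hL.1).1; omega) with h | ⟨rfl, h⟩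
    · exact absurd (hbot _ hz) (not_le.mpr h)
    · exact hL.2 z₂ h hz
  · have hle := hmono _ hR.1 _ hL.1 (Or.inl hlt)
    by_contra hne
    obtain ⟨⟨z₁, z₂⟩, hz, hfz⟩ :=
      hsurj (f (r', c') + 1) (by omega) (by have := (hbound _ hL.1).2; omega)
    rcases hread hR.1 hz (by omega) with h₁ | ⟨rfl, h₁⟩ <;>
      rcases hread hz hL.1 (by omega) with h₂ | ⟨rfl, h₂⟩
    · exact hgap _ hz ⟨h₂, h₁⟩
    · exact hL.2 z₂ h₂ hz
    · exact hR.2 z₂ h₁ hz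
    · exact lt_irrefl _ hlt

variable (hconv : RowsOrdConnected dom) (hP : IsPieri dom f t)
include hconv hP

lemma IsPieri.apply_add {k : ℕ} (h₁ : (r, c) ∈ dom) (h₂ : (r, c + k) ∈ dom) :
    f (r, c + k) = f (r, c) + k := by
  induction k with
  | zero => rfl
  | succ k ih =>
    have hmem : (r, c + k) ∈ dom := (hconv r).out h₁ h₂ ⟨by omega, by omega⟩
    rw [← add_assoc, hP.2.1 r _ hmem h₂, ih hmem, add_assoc]

lemma IsPieri.apply_le_apply {c' : ℕ} (h₁ : (r, c) ∈ dom) (h₂ : (r, c') ∈ dom)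
    (hle : c ≤ c') : f (r, c) ≤ f (r, c') := by
  obtain ⟨k, rfl⟩ := Nat.exists_eq_add_of_le hle
  exact (hP.apply_add hconv h₁ h₂).symm ▸ Nat.le_add_right _ _

lemma IsPieri.rightmost_le_leftmost {r r' cL cR : ℕ} (hL : LeftmostIn dom r cL)
    (hR : RightmostIn dom r' cR) (hlt : r < r') : f (r', cR) ≤ f (r, cL) := by
  obtain ⟨r₂, c₂, hr₂, hR₂, hgap⟩ := exists_rightmostIn_next_row ⟨_, hR.1, hlt⟩
  have hlink : f (r₂, c₂) ≤ f (r, cL) := by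
    rcases hP.2.2.2.1 r cL r₂ c₂ hL hR₂ hr₂ hgap with h | h <;> omega
  rcases (not_lt.mp fun h => hgap _ hR.1 ⟨hlt, h⟩ : r₂ ≤ r').eq_or_lt with rfl | hlt₂
  · rwa [hR.unique hR₂]
  · obtain ⟨cL₂, hcL₂, hL₂⟩ := exists_leftmostIn hR₂.1
    calc f (r', cR) ≤ f (r₂, cL₂) := IsPieri.rightmost_le_leftmost hL₂ hR hlt₂
      _ ≤ f (r₂, c₂) := hP.apply_le_apply hconv hL₂.1 hR₂.1 hcL₂
      _ ≤ f (r, cL) := hlink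
termination_by r' - r

lemma IsPieri.monotone {a b : Box} (ha : a ∈ dom) (hb : b ∈ dom) (hab : ReadBefore a b) :
    f a ≤ f b := by
  obtain ⟨a₁, a₂⟩ := a
  obtain ⟨b₁, b₂⟩ := b
  rcases hab with hlt | ⟨rfl, hlt⟩
  · obtain ⟨cR, hcR, hR⟩ := exists_rightmostIn ha
    obtain ⟨cL, hcL, hL⟩ := exists_leftmostIn hb
    calc f (a₁, a₂) ≤ f (a₁, cR) := hP.apply_le_apply hconv ha hR.1 hcR
      _ ≤ f (b₁, cL) := hP.rightmost_le_leftmost hconv hL hR hlt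
      _ ≤ f (b₁, b₂) := hP.apply_le_apply hconv hL.1 hb hcL
  · exact hP.apply_le_apply hconv ha hb hlt.le

/-- Either `z` has a left neighbour, with entry `w`, or it starts its row and the row below
ends with `w` or `w + 1`. -/
lemma IsPieri.exists_pred_or_lower {z : Box} {w : ℕ} (hz : z ∈ dom) (hw : 1 ≤ w)
    (hfz : f z = w + 1) : (∃ b ∈ dom, f b = w) ∨ ∃ z' ∈ dom, z.1 < z'.1 ∧ f z' = w + 1 := by
  obtain ⟨r, c⟩ := z
  obtain ⟨cL, hcL, hL⟩ := exists_leftmostIn hz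
  rcases hcL.lt_or_eq with hlt | rfl
  · have hmem : (r, c - 1) ∈ dom := (hconv r).out hL.1 hz ⟨by omega, by omega⟩
    have := hP.2.1 r (c - 1) hmem (by rwa [Nat.sub_add_cancel (by omega)])
    rw [Nat.sub_add_cancel (by omega)] at this
    exact .inl ⟨_, hmem, by omega⟩
  · by_cases hlow : ∃ b ∈ dom, r < b.1
    · obtain ⟨r₂, c₂, hr₂, hR₂, hgap⟩ := exists_rightmostIn_next_row hlow
      rcases hP.2.2.2.1 r cL r₂ c₂ hL hR₂ hr₂ hgap with h | h
      · exact .inr ⟨_, hR₂.1, hr₂, by omega⟩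
      · exact .inl ⟨_, hR₂.1, by omega⟩
    · have := hP.2.2.1 r cL hL fun b hb => not_lt.mp fun h => hlow ⟨b, hb, h⟩
      omega

lemma IsPieri.exists_eq (hne : dom.Nonempty) {v : ℕ} (hv : 1 ≤ v) (hvt : v ≤ t) :
    ∃ b ∈ dom, f b = v := by
  induction hvt using Nat.decreasingInduction with
  | self => exact hP.2.2.2.2.2 hne
  | of_succ w _ ih =>
    obtain ⟨z, hz, hmax⟩ := (dom.filter (f · = w + 1)).exists_max_image (·.1)
      (by obtain ⟨b, hb, hfb⟩ := ih (by omega); exact ⟨b, by simp [hb, hfb]⟩)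
    obtain ⟨hz, hfz⟩ := Finset.mem_filter.mp hz
    refine (hP.exists_pred_or_lower hconv hz hv hfz).resolve_right ?_
    rintro ⟨z', hz', hlt, hfz'⟩
    exact absurd (hmax z' (by simp [hz', hfz'])) (not_le.mpr hlt)

end Pieri

structure SlideSetup (lam nu xs : Finset Box) : Prop where
  young_lam : IsYoung lam
  young_nu : IsYoung nu
  strip : HorizontalStrip (nu \ lam)
  corner : ∀ x ∈ xs, InnerCorner lam x

namespace SlideSetup

variable {lam nu xs : Finset Box} (hS : SlideSetup lam nu xs) {r c : ℕ}
include hS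

lemma notMem_strip_of_mem_xs {b : Box} (hx : b ∈ xs) : b ∉ nu \ lam :=
  fun hs => (Finset.mem_sdiff.mp hs).2 (hS.corner b hx).1

lemma notMem_left_of_mem_xs {c' : ℕ} (hx : (r, c) ∈ xs) (hlt : c' < c) :
    (r, c') ∉ (nu \ lam) ∪ xs := by
  have hxl := (hS.corner _ hx).1
  simp only [Finset.mem_union, Finset.mem_sdiff, not_or, not_and, not_not]
  exact ⟨fun _ => hS.young_lam.mem_of_le hxl le_rfl hlt.le,
    fun hx' => (hS.corner _ hx').2.2 (hS.young_lam.mem_of_le hxl le_rfl hlt)⟩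

lemma notMem_above_of_mem_xs {r' : ℕ} (hx : (r, c) ∈ xs) (hlt : r' < r) :
    (r', c) ∉ (nu \ lam) ∪ xs := by
  have hxl := (hS.corner _ hx).1
  simp only [Finset.mem_union, Finset.mem_sdiff, not_or, not_and, not_not]
  exact ⟨fun _ => hS.young_lam.mem_of_le hxl hlt.le le_rfl,
    fun hx' => (hS.corner _ hx').2.1 (hS.young_lam.mem_of_le hxl hlt le_rfl)⟩

lemma notMem_below_of_mem_strip (hs : (r, c) ∈ nu \ lam) :
    (r + 1, c) ∉ (nu \ lam) ∪ xs := by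
  rw [Finset.mem_union, not_or]
  refine ⟨fun hs' => absurd (hS.strip.fst_eq hs hs') (by omega), fun hx => ?_⟩
  exact (Finset.mem_sdiff.mp hs).2 (hS.young_lam.mem_of_le (hS.corner _ hx).1 (by omega) le_rfl)

lemma mem_xs_of_mem_below (ha : (r, c) ∈ (nu \ lam) ∪ xs)
    (hb : (r + 1, c) ∈ (nu \ lam) ∪ xs) : (r, c) ∈ xs ∧ (r + 1, c) ∈ nu \ lam := by
  refine ⟨(Finset.mem_union.mp ha).resolve_left fun hs => hS.notMem_below_of_mem_strip hs hb,
    (Finset.mem_union.mp hb).resolve_right fun hx => ?_⟩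
  exact hS.notMem_above_of_mem_xs hx (Nat.lt_succ_self r) ha

lemma eq_succ_of_mem_xs_of_mem_strip {r' : ℕ} (hx : (r, c) ∈ xs) (hs : (r', c) ∈ nu \ lam)
    (hlt : r < r') : r' = r + 1 := by
  have hbelow : (r + 1, c) ∈ nu \ lam := Finset.mem_sdiff.mpr
    ⟨hS.young_nu.mem_of_le (Finset.mem_sdiff.mp hs).1 hlt le_rfl, (hS.corner _ hx).2.1⟩
  exact (hS.strip.fst_eq hbelow hs).symm

lemma notMem_right_of_mem_below_xs {c' : ℕ} (hx : (r, c) ∈ xs)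
    (hs : (r + 1, c) ∈ nu \ lam) (hlt : c < c') : (r + 1, c') ∉ (nu \ lam) ∪ xs := by
  rw [Finset.mem_union, not_or]
  refine ⟨fun hs' => ?_, fun hx' => hS.notMem_left_of_mem_xs hx' hlt (Finset.mem_union_left _ hs)⟩
  have hup : (r, c') ∈ nu \ lam := Finset.mem_sdiff.mpr
    ⟨hS.young_nu.mem_of_le (Finset.mem_sdiff.mp hs').1 (by omega) le_rfl,
      fun h => (hS.corner _ hx).2.2 (hS.young_lam.mem_of_le h le_rfl hlt)⟩
  exact absurd (hS.strip.fst_eq hup hs') (by omega)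

lemma not_readBefore_between {a : Box} (hx : (r, c) ∈ xs) (hs : (r + 1, c) ∈ nu \ lam)
    (ha : a ∈ (nu \ lam) ∪ xs) (h₁ : ReadBefore (r + 1, c) a) (h₂ : ReadBefore a (r, c)) :
    False := by
  obtain ⟨a₁, a₂⟩ := a
  obtain ⟨rfl, hlt⟩ | ⟨rfl, hlt⟩ : (a₁ = r + 1 ∧ c < a₂) ∨ (a₁ = r ∧ a₂ < c) := by
    unfold ReadBefore at h₁ h₂
    omega
  · exact hS.notMem_right_of_mem_below_xs hx hs hlt ha
  · exact hS.notMem_left_of_mem_xs hx hlt ha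

lemma not_adjB_of_mem_xs {a b : Box} (ha : a ∈ xs) (hb : b ∈ xs) : ¬ adjB a b := by
  obtain ⟨ar, ac⟩ := a
  obtain ⟨br, bc⟩ := b
  have ha' := Finset.mem_union_right (nu \ lam) ha
  have hb' := Finset.mem_union_right (nu \ lam) hb
  intro h
  simp only [adjB] at h
  rcases h with ⟨rfl, rfl | rfl⟩ | ⟨rfl, rfl | rfl⟩
  · exact hS.notMem_left_of_mem_xs hb (Nat.lt_succ_self _) ha'
  · exact hS.notMem_left_of_mem_xs ha (Nat.lt_succ_self _) hb'
  · exact hS.notMem_above_of_mem_xs hb (Nat.lt_succ_self _) ha'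
  · exact hS.notMem_above_of_mem_xs ha (Nat.lt_succ_self _) hb'

lemma right_below_of_isPieri {f : Box → ℕ} {t : ℕ} (hP : IsPieri (nu \ lam) f t)
    (hx : (r, c) ∈ xs) (hs : (r + 1, c) ∈ nu \ lam) (hz : (r, c + 1) ∈ nu \ lam) :
    f (r, c + 1) = f (r + 1, c) ∨ f (r, c + 1) = f (r + 1, c) + 1 := by
  have hR : RightmostIn (nu \ lam) (r + 1) c := ⟨hs, fun c' hc' h =>
    hS.notMem_right_of_mem_below_xs hx hs hc' (Finset.mem_union_left _ h)⟩
  have hL : LeftmostIn (nu \ lam) r (c + 1) := by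
    refine ⟨hz, fun c' hc' h => ?_⟩
    rcases (Nat.lt_succ_iff.mp hc').lt_or_eq with hlt | rfl
    · exact hS.notMem_left_of_mem_xs hx hlt (Finset.mem_union_left _ h)
    · exact hS.notMem_strip_of_mem_xs hx h
  exact hP.2.2.2.1 r (c + 1) (r + 1) c hL hR (Nat.lt_succ_self r) fun b _ h => by omega

end SlideSetup

section Switch

def InSwitch (D dm : Finset Box) (g : Box → ℕ) (v : ℕ) (b : Box) : Prop :=
  b ∈ D ∨ (b ∈ dm ∧ g b = v)

def Switches (D dm : Finset Box) (g : Box → ℕ) (v : ℕ) (b : Box) : Prop :=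
  InSwitch D dm g v b ∧ ∃ b', InSwitch D dm g v b' ∧ adjB b b'

variable {D dm D' dm' : Finset Box} {g g' : Box → ℕ} {v : ℕ} {b : Box}

lemma exists_ne_conn_iff_switches :
    (∃ b', (b' ∈ D ∨ b' ∈ dm ∧ g b' = v) ∧ b' ≠ b ∧
      conn (D ∪ dm.filter (fun c => g c = v)) b b') ↔ Switches D dm g v b := by
  have h := exists_ne_conn_iff (S := D ∪ dm.filter (fun c => g c = v)) (b := b)
  simp only [Finset.mem_union, Finset.mem_filter] at h
  exact h

variable (hst : switchStep (D, dm, g) v = (D', dm', g'))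
include hst

lemma mem_dots_of_switchStep : b ∈ D' ↔
    (b ∈ dm ∧ g b = v ∧ Switches D dm g v b) ∨ (b ∈ D ∧ ¬ Switches D dm g v b) := by
  rw [show D' = _ from congrArg Prod.fst hst.symm]
  simp only [switchStep, Finset.mem_union, Finset.mem_filter, exists_ne_conn_iff_switches]

lemma mem_dom_of_switchStep : b ∈ dm' ↔
    (b ∈ dm ∧ ¬ (g b = v ∧ Switches D dm g v b)) ∨ (b ∈ D ∧ Switches D dm g v b) := by
  rw [show dm' = _ from congrArg (·.2.1) hst.symm]
  simp only [switchStep, Finset.mem_union, Finset.mem_filter, exists_ne_conn_iff_switches]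

lemma entry_of_switchStep : g' b = if b ∈ D ∧ Switches D dm g v b then v else g b := by
  rw [show g' = _ from congrArg (·.2.2) hst.symm]
  simp only [switchStep, Finset.mem_union, Finset.mem_filter, exists_ne_conn_iff_switches]

lemma entry_of_switchStep_of_switches (hb : b ∈ D) (hsw : Switches D dm g v b) : g' b = v := by
  rw [entry_of_switchStep hst, if_pos ⟨hb, hsw⟩]

end Switch

lemma KState_succ (xs dom : Finset Box) (f : Box → ℕ) (m : ℕ) :
    KState xs dom f (m + 1) = switchStep (KState xs dom f m) (m + 1) := by
  rw [KState, List.range_succ, List.foldl_append, List.foldl_cons, List.foldl_nil, KState]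

/-- The state `(D, dm, g)` after the stages `1, …, i` of the slide: •'s `D`, numbered boxes
`dm` with entries `g`. -/
structure SlideInv (xs lam nu : Finset Box) (t i : ℕ) (D dm : Finset Box) (g : Box → ℕ) :
    Prop where
  dots_subset : D ⊆ (nu \ lam) ∪ xs
  dom_eq : dm = ((nu \ lam) ∪ xs) \ D
  dot_iff_not_dot_below : ∀ r c, (r, c) ∈ xs → (r + 1, c) ∈ nu \ lam →
    ((r, c) ∈ D ↔ (r + 1, c) ∉ D)
  dots_not_adj : ∀ a ∈ D, ∀ b ∈ D, ¬ adjB a b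
  monotone : ∀ a ∈ dm, ∀ b ∈ dm, ReadBefore a b → g a ≤ g b
  row_succ : ∀ r c, (r, c) ∈ dm → (r, c + 1) ∈ dm → g (r, c + 1) = g (r, c) + 1
  one_le : ∀ b ∈ dm, 1 ≤ g b
  le_max : ∀ b ∈ dm, g b ≤ t
  surj : ∀ v, 1 ≤ v → v ≤ t → ∃ b ∈ dm, g b = v
  lt_right : ∀ r c, (r, c) ∈ D → (r, c + 1) ∈ dm → i < g (r, c + 1)
  lt_below : ∀ r c, (r, c) ∈ D → (r + 1, c) ∈ dm → i < g (r + 1, c)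
  le_left : ∀ r c, (r, c + 1) ∈ D → (r, c) ∈ dm → g (r, c) ≤ i
  le_above : ∀ r c, (r + 1, c) ∈ D → (r, c) ∈ dm → g (r, c) ≤ i
  -- a • inside a row has just moved right, past the entry `i`
  across_dot : ∀ r c, (r, c + 1) ∈ D → (r, c) ∈ dm → (r, c + 2) ∈ (nu \ lam) ∪ xs →
    g (r, c) = i ∧ (r, c + 2) ∈ dm ∧ g (r, c + 2) = i + 1
  -- when a • slides down, the box on its right continues the row below
  right_below : ∀ r c, (r, c) ∈ D → (r + 1, c) ∈ dm → (r, c + 1) ∈ dm →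
    g (r, c + 1) = g (r + 1, c) ∨ g (r, c + 1) = g (r + 1, c) + 1
  xs_le : ∀ x ∈ xs, x ∈ dm → g x ≤ i

namespace SlideInv

variable {lam nu xs D dm D' dm' : Finset Box} {f g g' : Box → ℕ} {t i : ℕ} {a b : Box}

lemma notMem_dom_of_mem_dots (hI : SlideInv xs lam nu t i D dm g) (hb : b ∈ D) : b ∉ dm :=
  fun h => (Finset.mem_sdiff.mp (hI.dom_eq ▸ h)).2 hb

lemma mem_region_of_mem_dom (hI : SlideInv xs lam nu t i D dm g) (hb : b ∈ dm) :
    b ∈ (nu \ lam) ∪ xs :=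
  (Finset.mem_sdiff.mp (hI.dom_eq ▸ hb)).1

lemma mem_dom_of_notMem_dots (hI : SlideInv xs lam nu t i D dm g)
    (hU : b ∈ (nu \ lam) ∪ xs) (hb : b ∉ D) : b ∈ dm :=
  hI.dom_eq ▸ Finset.mem_sdiff.mpr ⟨hU, hb⟩

lemma not_lt_of_mem_dom (hS : SlideSetup lam nu xs) (hI : SlideInv xs lam nu t i D dm g)
    {r r' c : ℕ} (h₁ : (r, c) ∈ dm) (h₂ : (r', c) ∈ dm) : ¬ r < r' := by
  intro hlt
  rcases Finset.mem_union.mp (hI.mem_region_of_mem_dom h₂) with hs₂ | hx₂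
  · rcases Finset.mem_union.mp (hI.mem_region_of_mem_dom h₁) with hs₁ | hx₁
    · exact hlt.ne (hS.strip.fst_eq hs₁ hs₂)
    · obtain rfl := hS.eq_succ_of_mem_xs_of_mem_strip hx₁ hs₂ hlt
      by_cases hD : (r, c) ∈ D
      · exact hI.notMem_dom_of_mem_dots hD h₁
      · exact hI.notMem_dom_of_mem_dots
          (not_not.mp (mt (hI.dot_iff_not_dot_below r c hx₁ hs₂).mpr hD)) h₂
  · exact hS.notMem_above_of_mem_xs hx₂ hlt (hI.mem_region_of_mem_dom h₁)

lemma fst_eq_of_mem_dom (hS : SlideSetup lam nu xs) (hI : SlideInv xs lam nu t i D dm g)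
    {r r' c : ℕ} (h₁ : (r, c) ∈ dm) (h₂ : (r', c) ∈ dm) : r = r' :=
  le_antisymm (not_lt.mp (hI.not_lt_of_mem_dom hS h₂ h₁))
    (not_lt.mp (hI.not_lt_of_mem_dom hS h₁ h₂))

lemma horizontalStrip (hS : SlideSetup lam nu xs) (hI : SlideInv xs lam nu t i D dm g) :
    HorizontalStrip dm := by
  rintro ⟨r, c⟩ ha ⟨r', c'⟩ hb hne (rfl : c = c')
  exact hne (by rw [hI.fst_eq_of_mem_dom hS ha hb])

lemma not_adjB_of_apply_eq (hS : SlideSetup lam nu xs) (hI : SlideInv xs lam nu t i D dm g)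
    (ha : a ∈ dm) (hb : b ∈ dm) (heq : g a = g b) : ¬ adjB a b := by
  obtain ⟨ar, ac⟩ := a
  obtain ⟨br, bc⟩ := b
  intro h
  simp only [adjB] at h
  rcases h with ⟨rfl, rfl | rfl⟩ | ⟨rfl, rfl | rfl⟩
  · have := hI.row_succ _ _ ha hb
    omega
  · have := hI.row_succ _ _ hb ha
    omega
  · exact absurd (hI.fst_eq_of_mem_dom hS ha hb) (by omega)
  · exact absurd (hI.fst_eq_of_mem_dom hS ha hb) (by omega)

lemma switches_dot (hI : SlideInv xs lam nu t i D dm g) {r c : ℕ} (hD : (r, c) ∈ D)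
    (hsw : Switches D dm g (i + 1) (r, c)) :
    ((r, c + 1) ∈ dm ∧ g (r, c + 1) = i + 1) ∨ ((r + 1, c) ∈ dm ∧ g (r + 1, c) = i + 1) := by
  obtain ⟨-, ⟨r', c'⟩, hb', hadj⟩ := hsw
  rcases hb' with hD' | ⟨hdm', hg'⟩
  · exact absurd hadj (hI.dots_not_adj _ hD _ hD')
  simp only [adjB] at hadj
  rcases hadj with ⟨rfl, rfl | rfl⟩ | ⟨rfl, rfl | rfl⟩
  · exact .inl ⟨hdm', hg'⟩
  · have := hI.le_left _ _ hD hdm'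
    omega
  · exact .inr ⟨hdm', hg'⟩
  · have := hI.le_above _ _ hD hdm'
    omega

lemma switches_box (hS : SlideSetup lam nu xs) (hI : SlideInv xs lam nu t i D dm g) {r c : ℕ}
    (hdm : (r, c) ∈ dm) (hg : g (r, c) = i + 1) (hsw : Switches D dm g (i + 1) (r, c)) :
    (∃ c', c = c' + 1 ∧ (r, c') ∈ D) ∨ ∃ r', r = r' + 1 ∧ (r', c) ∈ D := by
  obtain ⟨-, ⟨r', c'⟩, hb', hadj⟩ := hsw
  rcases hb' with hD' | ⟨hdm', hg'⟩
  · simp only [adjB] at hadj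
    rcases hadj with ⟨rfl, rfl | rfl⟩ | ⟨rfl, rfl | rfl⟩
    · have := hI.le_left _ _ hD' hdm
      omega
    · exact .inl ⟨c', rfl, hD'⟩
    · have := hI.le_above _ _ hD' hdm
      omega
    · exact .inr ⟨r', rfl, hD'⟩
  · exact absurd hadj (hI.not_adjB_of_apply_eq hS hdm hdm' (hg.trans hg'.symm))

lemma le_of_readBefore_switches (hS : SlideSetup lam nu xs)
    (hI : SlideInv xs lam nu t i D dm g) (ha : a ∈ dm) (hb : b ∈ D)
    (hsw : Switches D dm g (i + 1) b) (hab : ReadBefore a b) : g a ≤ i + 1 := by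
  obtain ⟨r, c⟩ := b
  rcases hI.switches_dot hb hsw with ⟨hm, hg⟩ | ⟨hm, hg⟩
  · exact hg ▸ hI.monotone a ha _ hm (hab.trans (.inr ⟨rfl, Nat.lt_succ_self c⟩))
  · obtain ⟨hx, hs⟩ :=
      hS.mem_xs_of_mem_below (hI.dots_subset hb) (hI.mem_region_of_mem_dom hm)
    rcases readBefore_trichotomous a (r + 1, c) with h | rfl | h
    · exact hg ▸ hI.monotone a ha _ hm h
    · exact hg.le
    · exact (hS.not_readBefore_between hx hs (hI.mem_region_of_mem_dom ha) h hab).elim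

lemma le_of_switches_readBefore (hI : SlideInv xs lam nu t i D dm g) (hb : b ∈ dm)
    (ha : a ∈ D) (hsw : Switches D dm g (i + 1) a) (hab : ReadBefore a b) : i + 1 ≤ g b := by
  obtain ⟨r, c⟩ := a
  rcases hI.switches_dot ha hsw with ⟨hm, hg⟩ | ⟨hm, hg⟩
  · rcases eq_or_ne b (r, c + 1) with rfl | hbm
    · exact hg.ge
    · exact hg ▸ hI.monotone _ hm b hb (readBefore_succ_of_readBefore hab hbm)
  · exact hg ▸ hI.monotone _ hm b hb (ReadBefore.trans (.inl (Nat.lt_succ_self r)) hab)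

section Step

variable (hst : switchStep (D, dm, g) (i + 1) = (D', dm', g'))
include hst

lemma entry_eq_of_mem_dom (hI : SlideInv xs lam nu t i D dm g) (hb : b ∈ dm) : g' b = g b := by
  rw [entry_of_switchStep hst, if_neg fun h => hI.notMem_dom_of_mem_dots h.1 hb]

lemma mem_dom_of_adjB_dot (hI : SlideInv xs lam nu t i D dm g) {d : Box} (hd : d ∈ D)
    (hb : b ∈ dm') (hadj : adjB d b) :
    b ∈ dm ∧ ¬ (g b = i + 1 ∧ Switches D dm g (i + 1) b) := by
  rcases (mem_dom_of_switchStep hst).mp hb with h | ⟨hbD, -⟩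
  · exact h
  · exact absurd hadj (hI.dots_not_adj _ hd _ hbD)

lemma step_dots_subset (hI : SlideInv xs lam nu t i D dm g) : D' ⊆ (nu \ lam) ∪ xs := by
  intro b hb
  rcases (mem_dots_of_switchStep hst).mp hb with ⟨hdm, -⟩ | ⟨hD, -⟩
  · exact hI.mem_region_of_mem_dom hdm
  · exact hI.dots_subset hD

lemma step_dom_eq (hI : SlideInv xs lam nu t i D dm g) : dm' = ((nu \ lam) ∪ xs) \ D' := by
  ext b
  have h₁ := hI.notMem_dom_of_mem_dots (b := b)
  have h₂ := @hI.dots_subset b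
  have h₃ : b ∈ dm ↔ b ∈ (nu \ lam) ∪ xs ∧ b ∉ D := by rw [hI.dom_eq, Finset.mem_sdiff]
  rw [Finset.mem_sdiff, mem_dom_of_switchStep hst, mem_dots_of_switchStep hst]
  tauto

lemma step_dot_iff_not_dot_below (hS : SlideSetup lam nu xs)
    (hI : SlideInv xs lam nu t i D dm g) :
    ∀ r c, (r, c) ∈ xs → (r + 1, c) ∈ nu \ lam → ((r, c) ∈ D' ↔ (r + 1, c) ∉ D') := by
  intro r c hx hs
  have hcol := hI.dot_iff_not_dot_below r c hx hs
  simp only [mem_dots_of_switchStep hst]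
  by_cases hxD : (r, c) ∈ D
  · have hsdm := hI.mem_dom_of_notMem_dots (Finset.mem_union_left _ hs) (hcol.mp hxD)
    have hxdm := hI.notMem_dom_of_mem_dots hxD
    by_cases hsw : Switches D dm g (i + 1) (r, c)
    · have hgs : g (r + 1, c) = i + 1 := by
        rcases hI.switches_dot hxD hsw with ⟨hright, hg⟩ | ⟨-, hg⟩
        · have := hI.right_below r c hxD hsdm hright
          have := hI.lt_below r c hxD hsdm
          omega
        · exact hg
      have hssw : Switches D dm g (i + 1) (r + 1, c) :=
        ⟨.inr ⟨hsdm, hgs⟩, (r, c), .inl hxD, .inr ⟨rfl, .inr rfl⟩⟩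
      tauto
    · have hssw : ¬ (g (r + 1, c) = i + 1 ∧ Switches D dm g (i + 1) (r + 1, c)) :=
        fun ⟨hg, _⟩ => hsw ⟨.inl hxD, (r + 1, c), .inr ⟨hsdm, hg⟩, .inr ⟨rfl, .inl rfl⟩⟩
      tauto
  · have hsD : (r + 1, c) ∈ D := not_not.mp (mt hcol.mpr hxD)
    have hxg : g (r, c) ≠ i + 1 := by
      have := hI.xs_le _ hx (hI.mem_dom_of_notMem_dots (Finset.mem_union_right _ hx) hxD)
      omega
    have hssw : ¬ Switches D dm g (i + 1) (r + 1, c) := fun hsw => by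
      rcases hI.switches_dot hsD hsw with ⟨h, -⟩ | ⟨h, -⟩
      · exact hS.notMem_right_of_mem_below_xs hx hs (Nat.lt_succ_self c)
          (hI.mem_region_of_mem_dom h)
      · exact hS.notMem_below_of_mem_strip hs (hI.mem_region_of_mem_dom h)
    tauto

lemma step_dots_not_adj (hS : SlideSetup lam nu xs) (hI : SlideInv xs lam nu t i D dm g) :
    ∀ a ∈ D', ∀ b ∈ D', ¬ adjB a b := by
  intro a ha b hb hadj
  rcases (mem_dots_of_switchStep hst).mp ha with ⟨hadm, hag, -⟩ | ⟨haD, hasw⟩ <;>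
    rcases (mem_dots_of_switchStep hst).mp hb with ⟨hbdm, hbg, -⟩ | ⟨hbD, hbsw⟩
  · exact hI.not_adjB_of_apply_eq hS hadm hbdm (hag.trans hbg.symm) hadj
  · exact hbsw ⟨.inl hbD, a, .inr ⟨hadm, hag⟩, adjB_symm hadj⟩
  · exact hasw ⟨.inl haD, b, .inr ⟨hbdm, hbg⟩, hadj⟩
  · exact hI.dots_not_adj a haD b hbD hadj

lemma step_monotone (hS : SlideSetup lam nu xs) (hI : SlideInv xs lam nu t i D dm g) :
    ∀ a ∈ dm', ∀ b ∈ dm', ReadBefore a b → g' a ≤ g' b := by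
  intro a ha b hb hab
  rcases (mem_dom_of_switchStep hst).mp ha with ⟨hadm, -⟩ | ⟨haD, hasw⟩ <;>
    rcases (mem_dom_of_switchStep hst).mp hb with ⟨hbdm, -⟩ | ⟨hbD, hbsw⟩
  · rw [hI.entry_eq_of_mem_dom hst hadm, hI.entry_eq_of_mem_dom hst hbdm]
    exact hI.monotone a hadm b hbdm hab
  · rw [hI.entry_eq_of_mem_dom hst hadm, entry_of_switchStep_of_switches hst hbD hbsw]
    exact hI.le_of_readBefore_switches hS hadm hbD hbsw hab
  · rw [entry_of_switchStep_of_switches hst haD hasw, hI.entry_eq_of_mem_dom hst hbdm]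
    exact hI.le_of_switches_readBefore hbdm haD hasw hab
  · rw [entry_of_switchStep_of_switches hst haD hasw, entry_of_switchStep_of_switches hst hbD hbsw]

lemma step_row_succ (hS : SlideSetup lam nu xs) (hI : SlideInv xs lam nu t i D dm g) :
    ∀ r c, (r, c) ∈ dm' → (r, c + 1) ∈ dm' → g' (r, c + 1) = g' (r, c) + 1 := by
  intro r c h₁ h₂
  rcases (mem_dom_of_switchStep hst).mp h₁ with ⟨hdm₁, -⟩ | ⟨hD₁, hsw₁⟩ <;>
    rcases (mem_dom_of_switchStep hst).mp h₂ with ⟨hdm₂, hk₂⟩ | ⟨hD₂, hsw₂⟩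
  · rw [hI.entry_eq_of_mem_dom hst hdm₁, hI.entry_eq_of_mem_dom hst hdm₂]
    exact hI.row_succ r c hdm₁ hdm₂
  · rw [hI.entry_eq_of_mem_dom hst hdm₁, entry_of_switchStep_of_switches hst hD₂ hsw₂]
    rcases hI.switches_dot hD₂ hsw₂ with ⟨hm, -⟩ | ⟨hm, -⟩
    · have := hI.across_dot r c hD₂ hdm₁ (hI.mem_region_of_mem_dom hm)
      omega
    · have hx := (hS.mem_xs_of_mem_below (hI.dots_subset hD₂) (hI.mem_region_of_mem_dom hm)).1
      exact (hS.notMem_left_of_mem_xs hx (Nat.lt_succ_self c)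
        (hI.mem_region_of_mem_dom hdm₁)).elim
  · rw [entry_of_switchStep_of_switches hst hD₁ hsw₁, hI.entry_eq_of_mem_dom hst hdm₂]
    have hright : g (r, c + 1) ≠ i + 1 := fun hg =>
      hk₂ ⟨hg, .inr ⟨hdm₂, hg⟩, (r, c), .inl hD₁, .inl ⟨rfl, .inr rfl⟩⟩
    rcases hI.switches_dot hD₁ hsw₁ with ⟨-, hg⟩ | ⟨hm, hg⟩
    · exact absurd hg hright
    · have := hI.right_below r c hD₁ hm hdm₂
      omega
  · exact (hI.dots_not_adj _ hD₁ _ hD₂ (.inl ⟨rfl, .inl rfl⟩)).elim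

lemma step_bounds (hI : SlideInv xs lam nu t i D dm g) (hit : i + 1 ≤ t) :
    ∀ b ∈ dm', 1 ≤ g' b ∧ g' b ≤ t := by
  intro b hb
  rcases (mem_dom_of_switchStep hst).mp hb with ⟨hdm, -⟩ | ⟨hD, hsw⟩
  · rw [hI.entry_eq_of_mem_dom hst hdm]
    exact ⟨hI.one_le b hdm, hI.le_max b hdm⟩
  · rw [entry_of_switchStep_of_switches hst hD hsw]
    omega

lemma step_surj (hS : SlideSetup lam nu xs) (hI : SlideInv xs lam nu t i D dm g) :
    ∀ u, 1 ≤ u → u ≤ t → ∃ b ∈ dm', g' b = u := by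
  intro u hu hut
  obtain ⟨b, hb, rfl⟩ := hI.surj u hu hut
  by_cases hflip : g b = i + 1 ∧ Switches D dm g (i + 1) b
  · obtain ⟨r, c⟩ := b
    obtain ⟨d, hd, hadj⟩ : ∃ d ∈ D, adjB d (r, c) := by
      rcases hI.switches_box hS hb hflip.1 hflip.2 with ⟨c', rfl, hD⟩ | ⟨r', rfl, hD⟩
      · exact ⟨_, hD, .inl ⟨rfl, .inl rfl⟩⟩
      · exact ⟨_, hD, .inr ⟨rfl, .inl rfl⟩⟩
    have hsw : Switches D dm g (i + 1) d := ⟨.inl hd, _, .inr ⟨hb, hflip.1⟩, hadj⟩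
    exact ⟨d, (mem_dom_of_switchStep hst).mpr (.inr ⟨hd, hsw⟩),
      (entry_of_switchStep_of_switches hst hd hsw).trans hflip.1.symm⟩
  · exact ⟨b, (mem_dom_of_switchStep hst).mpr (.inl ⟨hb, hflip⟩), hI.entry_eq_of_mem_dom hst hb⟩

lemma step_lt_right (hI : SlideInv xs lam nu t i D dm g) :
    ∀ r c, (r, c) ∈ D' → (r, c + 1) ∈ dm' → i + 1 < g' (r, c + 1) := by
  intro r c h₁ h₂
  rcases (mem_dots_of_switchStep hst).mp h₁ with ⟨hdm₁, hg₁, -⟩ | ⟨hD₁, hsw₁⟩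
  · rcases (mem_dom_of_switchStep hst).mp h₂ with ⟨hdm₂, -⟩ | ⟨hD₂, -⟩
    · rw [hI.entry_eq_of_mem_dom hst hdm₂, hI.row_succ r c hdm₁ hdm₂, hg₁]
      omega
    · have := hI.le_left r c hD₂ hdm₁
      omega
  · obtain ⟨hdm₂, -⟩ := hI.mem_dom_of_adjB_dot hst hD₁ h₂ (.inl ⟨rfl, .inl rfl⟩)
    rw [hI.entry_eq_of_mem_dom hst hdm₂]
    have := hI.lt_right r c hD₁ hdm₂
    by_contra hle
    exact hsw₁ ⟨.inl hD₁, _, .inr ⟨hdm₂, by omega⟩, .inl ⟨rfl, .inl rfl⟩⟩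

lemma step_lt_below (hS : SlideSetup lam nu xs) (hI : SlideInv xs lam nu t i D dm g) :
    ∀ r c, (r, c) ∈ D' → (r + 1, c) ∈ dm' → i + 1 < g' (r + 1, c) := by
  intro r c h₁ h₂
  rcases (mem_dots_of_switchStep hst).mp h₁ with ⟨hdm₁, hg₁, -⟩ | ⟨hD₁, hsw₁⟩
  · rcases (mem_dom_of_switchStep hst).mp h₂ with ⟨hdm₂, -⟩ | ⟨hD₂, -⟩
    · exact absurd (hI.fst_eq_of_mem_dom hS hdm₁ hdm₂) (by omega)
    · have := hI.le_above r c hD₂ hdm₁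
      omega
  · obtain ⟨hdm₂, -⟩ := hI.mem_dom_of_adjB_dot hst hD₁ h₂ (.inr ⟨rfl, .inl rfl⟩)
    rw [hI.entry_eq_of_mem_dom hst hdm₂]
    have := hI.lt_below r c hD₁ hdm₂
    by_contra hle
    exact hsw₁ ⟨.inl hD₁, _, .inr ⟨hdm₂, by omega⟩, .inr ⟨rfl, .inl rfl⟩⟩

lemma step_le_left (hI : SlideInv xs lam nu t i D dm g) :
    ∀ r c, (r, c + 1) ∈ D' → (r, c) ∈ dm' → g' (r, c) ≤ i + 1 := by
  intro r c h₁ h₂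
  rcases (mem_dom_of_switchStep hst).mp h₂ with ⟨hdm₂, -⟩ | ⟨hD₂, hsw₂⟩
  · rw [hI.entry_eq_of_mem_dom hst hdm₂]
    rcases (mem_dots_of_switchStep hst).mp h₁ with ⟨hdm₁, hg₁, -⟩ | ⟨hD₁, -⟩
    · have := hI.row_succ r c hdm₂ hdm₁
      omega
    · have := hI.le_left r c hD₁ hdm₂
      omega
  · rw [entry_of_switchStep_of_switches hst hD₂ hsw₂]

lemma step_le_above (hS : SlideSetup lam nu xs) (hI : SlideInv xs lam nu t i D dm g) :
    ∀ r c, (r + 1, c) ∈ D' → (r, c) ∈ dm' → g' (r, c) ≤ i + 1 := by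
  intro r c h₁ h₂
  rcases (mem_dom_of_switchStep hst).mp h₂ with ⟨hdm₂, -⟩ | ⟨hD₂, hsw₂⟩
  · rw [hI.entry_eq_of_mem_dom hst hdm₂]
    rcases (mem_dots_of_switchStep hst).mp h₁ with ⟨hdm₁, -⟩ | ⟨hD₁, -⟩
    · exact absurd (hI.fst_eq_of_mem_dom hS hdm₂ hdm₁) (by omega)
    · have := hI.le_above r c hD₁ hdm₂
      omega
  · rw [entry_of_switchStep_of_switches hst hD₂ hsw₂]

lemma step_across_dot (hS : SlideSetup lam nu xs) (hI : SlideInv xs lam nu t i D dm g) :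
    ∀ r c, (r, c + 1) ∈ D' → (r, c) ∈ dm' → (r, c + 2) ∈ (nu \ lam) ∪ xs →
      g' (r, c) = i + 1 ∧ (r, c + 2) ∈ dm' ∧ g' (r, c + 2) = i + 1 + 1 := by
  intro r c h₁ h₂ hU
  rcases (mem_dots_of_switchStep hst).mp h₁ with ⟨hdm₁, hg₁, hsw₁⟩ | ⟨hD₁, hsw₁⟩
  · rcases hI.switches_box hS hdm₁ hg₁ hsw₁ with ⟨c', hc, hD⟩ | ⟨r', rfl, hD⟩
    · obtain rfl : c = c' := by omega
      have hsw : Switches D dm g (i + 1) (r, c) :=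
        ⟨.inl hD, _, .inr ⟨hdm₁, hg₁⟩, .inl ⟨rfl, .inl rfl⟩⟩
      have hdm₃ : (r, c + 2) ∈ dm := hI.mem_dom_of_notMem_dots hU fun hD₃ => by
        have := hI.le_left r (c + 1) hD₃ hdm₁
        omega
      have hg₃ : g (r, c + 2) = g (r, c + 1) + 1 := hI.row_succ r (c + 1) hdm₁ hdm₃
      refine ⟨entry_of_switchStep_of_switches hst hD hsw,
        (mem_dom_of_switchStep hst).mpr (.inl ⟨hdm₃, fun h => by omega⟩), ?_⟩
      rw [hI.entry_eq_of_mem_dom hst hdm₃]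
      omega
    · obtain ⟨hx, hs⟩ :=
        hS.mem_xs_of_mem_below (hI.dots_subset hD) (hI.mem_region_of_mem_dom hdm₁)
      exact (hS.notMem_right_of_mem_below_xs hx hs (by omega) hU).elim
  · obtain ⟨hdm₂, -⟩ := hI.mem_dom_of_adjB_dot hst hD₁ h₂ (.inl ⟨rfl, .inr rfl⟩)
    obtain ⟨-, hdm₃, hg₃⟩ := hI.across_dot r c hD₁ hdm₂ hU
    exact (hsw₁ ⟨.inl hD₁, _, .inr ⟨hdm₃, hg₃⟩, .inl ⟨rfl, .inl rfl⟩⟩).elim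

lemma step_right_below (hS : SlideSetup lam nu xs) (hI : SlideInv xs lam nu t i D dm g) :
    ∀ r c, (r, c) ∈ D' → (r + 1, c) ∈ dm' → (r, c + 1) ∈ dm' →
      g' (r, c + 1) = g' (r + 1, c) ∨ g' (r, c + 1) = g' (r + 1, c) + 1 := by
  intro r c h₁ h₂ h₃
  rcases (mem_dots_of_switchStep hst).mp h₁ with ⟨hdm₁, hg₁, -⟩ | ⟨hD₁, -⟩
  · have h₂U := (Finset.mem_sdiff.mp (hI.step_dom_eq hst ▸ h₂)).1
    have hx := (hS.mem_xs_of_mem_below (hI.mem_region_of_mem_dom hdm₁) h₂U).1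
    have := hI.xs_le _ hx hdm₁
    omega
  · obtain ⟨hdm₂, -⟩ := hI.mem_dom_of_adjB_dot hst hD₁ h₂ (.inr ⟨rfl, .inl rfl⟩)
    obtain ⟨hdm₃, -⟩ := hI.mem_dom_of_adjB_dot hst hD₁ h₃ (.inl ⟨rfl, .inl rfl⟩)
    rw [hI.entry_eq_of_mem_dom hst hdm₂, hI.entry_eq_of_mem_dom hst hdm₃]
    exact hI.right_below r c hD₁ hdm₂ hdm₃

lemma step_xs_le (hI : SlideInv xs lam nu t i D dm g) : ∀ x ∈ xs, x ∈ dm' → g' x ≤ i + 1 := by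
  intro x hx h
  rcases (mem_dom_of_switchStep hst).mp h with ⟨hdm, -⟩ | ⟨hD, hsw⟩
  · rw [hI.entry_eq_of_mem_dom hst hdm]
    have := hI.xs_le x hx hdm
    omega
  · rw [entry_of_switchStep_of_switches hst hD hsw]

end Step

theorem succ (hS : SlideSetup lam nu xs) (hI : SlideInv xs lam nu t i D dm g)
    (hit : i + 1 ≤ t) (hst : switchStep (D, dm, g) (i + 1) = (D', dm', g')) :
    SlideInv xs lam nu t (i + 1) D' dm' g' where
  dots_subset := hI.step_dots_subset hst
  dom_eq := hI.step_dom_eq hst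
  dot_iff_not_dot_below := hI.step_dot_iff_not_dot_below hst hS
  dots_not_adj := hI.step_dots_not_adj hst hS
  monotone := hI.step_monotone hst hS
  row_succ := hI.step_row_succ hst hS
  one_le b hb := (hI.step_bounds hst hit b hb).1
  le_max b hb := (hI.step_bounds hst hit b hb).2
  surj := hI.step_surj hst hS
  lt_right := hI.step_lt_right hst
  lt_below := hI.step_lt_below hst hS
  le_left := hI.step_le_left hst
  le_above := hI.step_le_above hst hS
  across_dot := hI.step_across_dot hst hS
  right_below := hI.step_right_below hst hS
  xs_le := hI.step_xs_le hst

theorem init (hS : SlideSetup lam nu xs) (hP : IsPieri (nu \ lam) f t)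
    (hne : (nu \ lam).Nonempty) : SlideInv xs lam nu t 0 xs (nu \ lam) f where
  dots_subset := Finset.subset_union_right
  dom_eq := (Finset.union_sdiff_cancel_right
    (Finset.disjoint_right.mpr fun _ hx => hS.notMem_strip_of_mem_xs hx)).symm
  dot_iff_not_dot_below _ _ hx hs := iff_of_true hx fun hs' => hS.notMem_strip_of_mem_xs hs' hs
  dots_not_adj _ ha _ hb := hS.not_adjB_of_mem_xs ha hb
  monotone _ ha _ hb := hP.monotone (hS.young_lam.rowsOrdConnected_sdiff hS.young_nu) ha hb
  row_succ := hP.2.1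
  one_le b hb := (hP.2.2.2.2.1 b hb).1
  le_max b hb := (hP.2.2.2.2.1 b hb).2
  surj _ hv hvt := hP.exists_eq (hS.young_lam.rowsOrdConnected_sdiff hS.young_nu) hne hv hvt
  lt_right _ _ _ h := (hP.2.2.2.2.1 _ h).1
  lt_below _ _ _ h := (hP.2.2.2.2.1 _ h).1
  le_left _ c hx h :=
    (hS.notMem_left_of_mem_xs hx (Nat.lt_succ_self c) (Finset.mem_union_left _ h)).elim
  le_above r _ hx h :=
    (hS.notMem_above_of_mem_xs hx (Nat.lt_succ_self r) (Finset.mem_union_left _ h)).elim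
  across_dot _ c hx h _ :=
    (hS.notMem_left_of_mem_xs hx (Nat.lt_succ_self c) (Finset.mem_union_left _ h)).elim
  right_below _ _ hx hs hz := hS.right_below_of_isPieri hP hx hs hz
  xs_le _ hx h := absurd h (hS.notMem_strip_of_mem_xs hx)

theorem kState (hS : SlideSetup lam nu xs) (hP : IsPieri (nu \ lam) f t)
    (hne : (nu \ lam).Nonempty) {m : ℕ} (hm : m ≤ t) :
    SlideInv xs lam nu t m (KState xs (nu \ lam) f m).1 (KState xs (nu \ lam) f m).2.1
      (KState xs (nu \ lam) f m).2.2 := by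
  induction m with
  | zero => exact init hS hP hne
  | succ m ih =>
    rw [KState_succ]
    exact (ih (by omega)).succ hS hm rfl

theorem isPieri (hS : SlideSetup lam nu xs) (hI : SlideInv xs lam nu t i D dm g) :
    IsPieri dm g t :=
  isPieri_of_monotone (hI.horizontalStrip hS) hI.row_succ hI.monotone
    (fun b hb => ⟨hI.one_le b hb, hI.le_max b hb⟩) hI.surj

end SlideInv

theorem stmt10_general (lam nu : Finset Box) (f : Box → ℕ) (t : ℕ) (xs : Finset Box)
    (hlam : IsYoung lam) (hnu : IsYoung nu)
    (hP : IsPieri (nu \ lam) f t)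
    (hxsc : ∀ x ∈ xs, InnerCorner lam x) :
    IsPieri (KJdt xs (nu \ lam) f).1 (KJdt xs (nu \ lam) f).2 t := by
  rcases (nu \ lam).eq_empty_or_nonempty with hempty | hne
  · -- with no boxes there are no stages: the slide returns `(∅, f)`
    rw [hempty] at hP ⊢
    exact hP
  · have hS : SlideSetup lam nu xs := ⟨hlam, hnu, hP.1, hxsc⟩
    rw [KJdt, hP.maxEntry_eq hne]
    exact (SlideInv.kState hS hP hne le_rfl).isPieri hS

/-- a K-jdt slide applied to a `t`-Pieri filling results in a
`t`-Pieri filling. -/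
theorem stmt10 (lam nu : Finset Box) (f : Box → ℕ) (t : ℕ) (xs : Finset Box)
    (hlam : IsYoung lam) (hnu : IsYoung nu) (hsub : lam ⊆ nu)
    (hP : IsPieri (nu \ lam) f t) (hxs : xs.Nonempty)
    (hxsc : ∀ x ∈ xs, InnerCorner lam x) :
    IsPieri (KJdt xs (nu \ lam) f).1 (KJdt xs (nu \ lam) f).2 t :=
  stmt10_general lam nu f t xs hlam hnu hP hxsc
end
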